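/- arXiv:2410.14550 — 6 statements merged into one kernel-verified Lean document; each statement's English description precedes it below -/
import Mathlib

section
/- There exists a bistochastic matrix Λ mapping probability vector p to q if and only if p majorizes q, i.e., for all k, the sum of the k largest entries of p is at least the sum of the k largest entries of q. -/
open Finset

/-- `p` is a probability vector: nonnegative entries summing to 1. -/
def IsProbVec {d : ℕ} (p : Fin d → ℝ) : Prop :=
  (∀ i, 0 ≤ p i) ∧ ∑ i, p i = 1

/-- Sum of the `k` largest entries of `p` (first `k` entries of the
nonincreasing rearrangement of `p`). -/
noncomputable def topSum {d : ℕ} (p : Fin d → ℝ) (k : ℕ) : ℝ :=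
  ∑ i ∈ Finset.univ.filter (fun i : Fin d => (i : ℕ) < k),
    p (Tuple.sort (fun i => -p i) i)

/-- `p` majorizes `q`. -/
def Majorizes {d : ℕ} (p q : Fin d → ℝ) : Prop :=
  ∀ k : ℕ, k ≤ d → topSum q k ≤ topSum p k

/-- A bistochastic (doubly stochastic) matrix. -/
def IsBistochastic {d : ℕ} (Λ : Matrix (Fin d) (Fin d) ℝ) : Prop :=
  (∀ i j, 0 ≤ Λ i j) ∧ (∀ i, ∑ j, Λ i j = 1) ∧ (∀ j, ∑ i, Λ i j = 1)

/-!
Weights `0 ≤ c ≤ 1` with `∑ c = k` satisfy `∑ cᵢ pᵢ ≤ topSum p k`: compared with the indicator of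
the top `k` entries, `c` only moves mass from larger to smaller entries of `p`. If `q = Λ p` with
`Λ` bistochastic, the sum of `q` over a set `T` of `k` indices is such a weighted sum of `p`, with
weights `cᵢ = ∑_{j ∈ T} Λ j i`.

Conversely, by Birkhoff's theorem the vectors `Λ p` form the convex hull of the rearrangements of
`p`, so by Hahn–Banach it suffices that every linear functional `c` satisfies
`∑ cᵢ qᵢ ≤ ∑ cᵢ p_{σ i}` for some permutation `σ`. Listing the coordinates in decreasing order of
`c` and summing by parts, this follows from the partial sums of `q` in that order being bounded
by `topSum q k ≤ topSum p k`, with equality of the total sums.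
-/

open scoped Matrix

section

variable {d : ℕ}

noncomputable def sortDesc (p : Fin d → ℝ) : Equiv.Perm (Fin d) := Tuple.sort fun i => -p i

theorem antitone_comp_sortDesc (p : Fin d → ℝ) : Antitone (p ∘ sortDesc p) := fun _ _ hij =>
  neg_le_neg_iff.1 (Tuple.monotone_sort (fun i => -p i) hij)

noncomputable def topSet (p : Fin d → ℝ) (k : ℕ) : Finset (Fin d) :=
  (univ.filter fun i : Fin d => (i : ℕ) < k).map (sortDesc p).toEmbedding

theorem topSum_eq_sum_topSet (p : Fin d → ℝ) (k : ℕ) : topSum p k = ∑ i ∈ topSet p k, p i := by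
  rw [topSet, sum_map]; rfl

theorem map_valEmbedding_filter_val_lt {k : ℕ} (hk : k ≤ d) :
    (univ.filter fun i : Fin d => (i : ℕ) < k).map Fin.valEmbedding = range k := by
  ext n
  simp only [mem_map, mem_filter, mem_univ, true_and, Fin.valEmbedding_apply, mem_range]
  exact ⟨by rintro ⟨a, ha, rfl⟩; exact ha, fun h => ⟨⟨n, by omega⟩, h, rfl⟩⟩

theorem card_filter_val_lt {k : ℕ} (hk : k ≤ d) :
    (univ.filter fun i : Fin d => (i : ℕ) < k).card = k := by
  rw [← card_map Fin.valEmbedding, map_valEmbedding_filter_val_lt hk, card_range]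

theorem card_topSet (p : Fin d → ℝ) {k : ℕ} (hk : k ≤ d) : (topSet p k).card = k := by
  rw [topSet, card_map, card_filter_val_lt hk]

theorem le_of_mem_topSet_of_notMem {p : Fin d → ℝ} {k : ℕ} {i j : Fin d}
    (hi : i ∈ topSet p k) (hj : j ∉ topSet p k) : p j ≤ p i := by
  obtain ⟨a, ha, rfl⟩ := mem_map.1 hi
  have hb : ¬ ((sortDesc p).symm j : ℕ) < k := fun hb =>
    hj (mem_map.2 ⟨_, by simpa using hb, by simp⟩)
  simpa using antitone_comp_sortDesc p (show a ≤ (sortDesc p).symm j by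
    rw [Fin.le_def]; simp only [mem_filter, mem_univ, true_and] at ha; omega)

theorem sum_mul_nonpos_of_sum_eq_zero {ι : Type*} [Fintype ι] {w x : ι → ℝ} {s : Finset ι}
    (hw : ∑ i, w i = 0) (hws : ∀ i ∈ s, w i ≤ 0) (hwsc : ∀ i ∉ s, 0 ≤ w i)
    (hx : ∀ i ∈ s, ∀ j ∉ s, x j ≤ x i) : ∑ i, w i * x i ≤ 0 := by
  obtain ⟨t, hts, htsc⟩ : ∃ t, (∀ i ∈ s, t ≤ x i) ∧ ∀ j ∉ s, x j ≤ t := by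
    rcases s.eq_empty_or_nonempty with rfl | hs
    · obtain ⟨t, ht⟩ := (Set.finite_range x).bddAbove
      exact ⟨t, by simp, fun j _ => ht ⟨j, rfl⟩⟩
    · exact ⟨s.inf' hs x, fun i hi => inf'_le x hi,
        fun j hj => le_inf' hs x fun i hi => hx i hi j hj⟩
  calc ∑ i, w i * x i = ∑ i, w i * (x i - t) := by
        simp only [mul_sub, sum_sub_distrib, ← sum_mul, hw, zero_mul, sub_zero]
    _ ≤ 0 := sum_nonpos fun i _ => by
        by_cases hi : i ∈ s
        · exact mul_nonpos_of_nonpos_of_nonneg (hws i hi) (sub_nonneg.2 (hts i hi))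
        · exact mul_nonpos_of_nonneg_of_nonpos (hwsc i hi) (sub_nonpos.2 (htsc i hi))

theorem sum_mul_le_topSum {p c : Fin d → ℝ} {k : ℕ} (hk : k ≤ d) (hc0 : ∀ i, 0 ≤ c i)
    (hc1 : ∀ i, c i ≤ 1) (hc : ∑ i, c i = k) : ∑ i, c i * p i ≤ topSum p k := by
  let w : Fin d → ℝ := fun i => c i - if i ∈ topSet p k then 1 else 0
  have hw : ∑ i, w i = 0 := by simp [w, sum_sub_distrib, hc, card_topSet p hk]
  have hwp : ∑ i, w i * p i ≤ 0 :=
    sum_mul_nonpos_of_sum_eq_zero (s := topSet p k) hw (fun i hi => by simp [w, hi, hc1])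
      (fun i hi => by simp [w, hi, hc0]) fun _ hi _ hj => le_of_mem_topSet_of_notMem hi hj
  have hwp' : ∑ i, w i * p i = ∑ i, c i * p i - topSum p k := by
    simp [w, sub_mul, sum_sub_distrib, ite_mul, sum_ite_mem, topSum_eq_sum_topSet]
  linarith

theorem sum_le_topSum (p : Fin d → ℝ) (s : Finset (Fin d)) :
    ∑ i ∈ s, p i ≤ topSum p s.card := by
  have := sum_mul_le_topSum (p := p) (c := fun i => if i ∈ s then 1 else 0)
    (card_le_univ s |>.trans_eq (Fintype.card_fin d))
    (fun i => by split_ifs <;> norm_num) (fun i => by split_ifs <;> norm_num) (by simp)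
  simpa [ite_mul, sum_ite_mem] using this

theorem majorizes_mulVec {Λ : Matrix (Fin d) (Fin d) ℝ} (hΛ : Λ ∈ doublyStochastic ℝ (Fin d))
    (p : Fin d → ℝ) : Majorizes p (Λ *ᵥ p) := by
  intro k hk
  rw [topSum_eq_sum_topSet]
  calc ∑ j ∈ topSet (Λ *ᵥ p) k, (Λ *ᵥ p) j = ∑ i, (∑ j ∈ topSet (Λ *ᵥ p) k, Λ j i) * p i := by
        simp only [Matrix.mulVec, dotProduct, sum_mul]
        exact sum_comm
    _ ≤ topSum p k := by
        refine sum_mul_le_topSum hk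
          (fun i => sum_nonneg fun j _ => nonneg_of_mem_doublyStochastic hΛ) (fun i => ?_) ?_
        · exact (sum_le_sum_of_subset_of_nonneg (subset_univ _) fun j _ _ =>
            nonneg_of_mem_doublyStochastic hΛ).trans_eq (sum_col_of_mem_doublyStochastic hΛ i)
        · rw [sum_comm]
          simp [sum_row_of_mem_doublyStochastic hΛ, card_topSet _ hk]

theorem sum_range_mul_le_of_antitoneOn {a x y : ℕ → ℝ} {n : ℕ} (ha : AntitoneOn a (Set.Iio n))
    (hxy : ∀ k ≤ n, ∑ i ∈ range k, x i ≤ ∑ i ∈ range k, y i)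
    (hn : ∑ i ∈ range n, x i = ∑ i ∈ range n, y i) :
    ∑ i ∈ range n, a i * x i ≤ ∑ i ∈ range n, a i * y i := by
  suffices 0 ≤ ∑ i ∈ range n, a i • (y - x) i by
    simpa [mul_sub, sum_sub_distrib] using this
  rw [sum_range_by_parts]
  simp only [Pi.sub_apply, sum_sub_distrib, hn, sub_self, smul_zero, zero_sub, neg_nonneg]
  refine sum_nonpos fun i hi => smul_nonpos_of_nonpos_of_nonneg ?_ (sub_nonneg.2 (hxy _ ?_))
  · have := mem_range.1 hi
    exact sub_nonpos.2 (ha (Set.mem_Iio.2 (by omega)) (Set.mem_Iio.2 (by omega)) (by omega))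
  · have := mem_range.1 hi
    omega

theorem sum_mul_le_sum_mul_of_antitone {a x y : Fin d → ℝ} (ha : Antitone a)
    (hxy : ∀ k ≤ d, ∑ i ∈ univ.filter (fun i : Fin d => (i : ℕ) < k), x i
      ≤ ∑ i ∈ univ.filter (fun i : Fin d => (i : ℕ) < k), y i)
    (hd : ∑ i, x i = ∑ i, y i) : ∑ i, a i * x i ≤ ∑ i, a i * y i := by
  let seq (f : Fin d → ℝ) (n : ℕ) : ℝ := if h : n < d then f ⟨n, h⟩ else 0
  have hseq (f : Fin d → ℝ) (i : Fin d) : f i = seq f i := by simp [seq]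
  have hpartial (f : Fin d → ℝ) {k : ℕ} (hk : k ≤ d) :
      ∑ i ∈ univ.filter (fun i : Fin d => (i : ℕ) < k), f i = ∑ n ∈ range k, seq f n := by
    rw [← map_valEmbedding_filter_val_lt hk, sum_map]
    exact sum_congr rfl fun i _ => hseq f i
  have htotal (f : Fin d → ℝ) : ∑ i, f i = ∑ n ∈ range d, seq f n := by
    rw [← Fin.sum_univ_eq_sum_range]
    exact sum_congr rfl fun i _ => hseq f i
  have hprod (f g : Fin d → ℝ) : ∑ i, f i * g i = ∑ n ∈ range d, seq f n * seq g n := by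
    rw [← Fin.sum_univ_eq_sum_range (fun n => seq f n * seq g n)]
    exact sum_congr rfl fun i _ => by rw [← hseq, ← hseq]
  have key := sum_range_mul_le_of_antitoneOn (a := seq a) (x := seq x) (y := seq y) (n := d)
    (fun i hi j hj hij => by
      simpa [seq, show i < d from hi, show j < d from hj] using ha (Fin.mk_le_mk.2 hij))
    (fun k hk => by simpa only [hpartial _ hk] using hxy k hk)
    (by simpa only [htotal] using hd)
  rwa [hprod, hprod]

theorem exists_perm_sum_mul_le_of_majorizes {p q : Fin d → ℝ} (hpq : Majorizes p q)
    (hsum : ∑ i, q i = ∑ i, p i) (c : Fin d → ℝ) :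
    ∃ σ : Equiv.Perm (Fin d), ∑ i, c i * q i ≤ ∑ i, c i * p (σ i) := by
  set σc := sortDesc c
  set σp := sortDesc p
  refine ⟨σc.symm.trans σp, ?_⟩
  have hpartial (k : ℕ) (hk : k ≤ d) :
      ∑ i ∈ univ.filter (fun i : Fin d => (i : ℕ) < k), q (σc i) ≤ topSum p k := by
    have := sum_le_topSum q ((univ.filter fun i : Fin d => (i : ℕ) < k).map σc.toEmbedding)
    rw [sum_map, card_map, card_filter_val_lt hk] at this
    exact this.trans (hpq k hk)
  calc ∑ i, c i * q i = ∑ i, c (σc i) * q (σc i) := (Equiv.sum_comp σc _).symm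
    _ ≤ ∑ i, c (σc i) * p (σp i) :=
        sum_mul_le_sum_mul_of_antitone (antitone_comp_sortDesc c) hpartial
          (by rw [Equiv.sum_comp σc q, Equiv.sum_comp σp p, hsum])
    _ = ∑ i, c i * p ((σc.symm.trans σp) i) := by
        rw [← Equiv.sum_comp σc (fun i => c i * p ((σc.symm.trans σp) i))]
        simp

theorem mem_convexHull_of_forall_exists_le {E : Type*} [AddCommGroup E] [Module ℝ E]
    [TopologicalSpace E] [IsTopologicalAddGroup E] [ContinuousSMul ℝ E] [LocallyConvexSpace ℝ E]
    [T2Space E] {s : Set E} (hs : s.Finite) {x : E}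
    (h : ∀ f : StrongDual ℝ E, ∃ y ∈ s, f x ≤ f y) : x ∈ convexHull ℝ s := by
  by_contra hx
  obtain ⟨f, u, hf, hfx⟩ := geometric_hahn_banach_closed_point (convex_convexHull ℝ s)
    (hs.isCompact_convexHull ℝ).isClosed hx
  obtain ⟨y, hy, hxy⟩ := h f
  linarith [hf y (subset_convexHull ℝ s hy)]

theorem image_mulVec_doublyStochastic {n : Type*} [Fintype n] [DecidableEq n] (p : n → ℝ) :
    (· *ᵥ p) '' (doublyStochastic ℝ n : Set (Matrix n n ℝ))
      = convexHull ℝ (Set.range fun σ : Equiv.Perm n => p ∘ σ) := by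
  rw [doublyStochastic_eq_convexHull_permMatrix]
  convert ((Matrix.mulVecBilin ℝ ℝ).flip p).image_convexHull _ using 2 <;> ext <;>
    simp [Matrix.permMatrix_mulVec]

end

/-- There exists a bistochastic matrix mapping `p` to `q` iff `p` majorizes `q`. -/
theorem stmt0 {d : ℕ} (p q : Fin d → ℝ) (hp : IsProbVec p) (hq : IsProbVec q) :
    (∃ Λ : Matrix (Fin d) (Fin d) ℝ, IsBistochastic Λ ∧ Λ.mulVec p = q) ↔ Majorizes p q := by
  simp only [IsBistochastic, ← mem_doublyStochastic_iff_sum]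
  constructor
  · rintro ⟨Λ, hΛ, rfl⟩
    exact majorizes_mulVec hΛ p
  · intro hpq
    have hq_mem : q ∈ convexHull ℝ (Set.range fun σ : Equiv.Perm (Fin d) => p ∘ σ) := by
      refine mem_convexHull_of_forall_exists_le (Set.finite_range _) fun f => ?_
      obtain ⟨σ, hσ⟩ := exists_perm_sum_mul_le_of_majorizes hpq (by rw [hq.2, hp.2])
        fun i => f fun j => if i = j then 1 else 0
      refine ⟨p ∘ σ, ⟨σ, rfl⟩, ?_⟩
      rw [← f.coe_coe, f.toLinearMap.pi_apply_eq_sum_univ, f.toLinearMap.pi_apply_eq_sum_univ]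
      simpa [mul_comm] using hσ
    rw [← image_mulVec_doublyStochastic] at hq_mem
    exact hq_mem
end

section
/- A tensor T is a thermal tensor with respect to Gibbs vector γ (i.e., T(γ, q) = γ for every probability vector q) if and only if for all probability vectors p, q, the output T(p,q) is a probability vector thermomajorized by p with respect to γ. -/
open Finset

def tApply {d : ℕ} (T : Fin d → Fin d → Fin d → ℝ) (p q : Fin d → ℝ) : Fin d → ℝ :=
  fun i => ∑ j, ∑ k, T i j k * p j * q k

/-- Column-stochastic matrix. -/
def IsStochasticMatrix {d : ℕ} (Λ : Matrix (Fin d) (Fin d) ℝ) : Prop :=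
  (∀ i j, 0 ≤ Λ i j) ∧ (∀ j, ∑ i, Λ i j = 1)

/-- `p` thermomajorizes `r` with respect to `γ`: there is a stochastic matrix
fixing `γ` and mapping `p` to `r`. -/
def ThermoMaj {d : ℕ} (γ p r : Fin d → ℝ) : Prop :=
  ∃ Λ : Matrix (Fin d) (Fin d) ℝ,
    IsStochasticMatrix Λ ∧ Λ.mulVec γ = γ ∧ Λ.mulVec p = r

/-- A stochastic tensor `T` is thermal w.r.t. `γ` (i.e. `T(γ,q) = γ` for every
probability vector `q`) iff for all probability vectors `p, q` the output
`T(p,q)` is a probability vector thermomajorized by `p` w.r.t. `γ`. -/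
theorem stmt4 {d : ℕ} (γ : Fin d → ℝ) (hγ : IsProbVec γ) (hγpos : ∀ i, 0 < γ i)
    (T : Fin d → Fin d → Fin d → ℝ)
    (hnn : ∀ i j k, 0 ≤ T i j k) (hstoch : ∀ j k, ∑ i, T i j k = 1) :
    (∀ q : Fin d → ℝ, IsProbVec q → tApply T γ q = γ) ↔
      (∀ p q : Fin d → ℝ, IsProbVec p → IsProbVec q →
        IsProbVec (tApply T p q) ∧ ThermoMaj γ p (tApply T p q)) := by
  constructor
  · intro hthermal p q hp hq
    have hΛeq : ∀ r : Fin d → ℝ,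
        (Matrix.of fun i j => ∑ k, T i j k * q k).mulVec r = tApply T r q := by
      intro r
      funext i
      simp only [Matrix.mulVec, Matrix.of_apply, dotProduct, tApply, Finset.sum_mul]
      congr 1; funext j; congr 1; funext k; ring
    constructor
    · constructor
      · intro i
        apply Finset.sum_nonneg; intro j _
        apply Finset.sum_nonneg; intro k _
        exact mul_nonneg (mul_nonneg (hnn i j k) (hp.1 j)) (hq.1 k)
      · have : ∑ i, tApply T p q i
            = ∑ j, ∑ k, (∑ i, T i j k) * p j * q k := by
          unfold tApply
          rw [Finset.sum_comm]
          congr 1; funext j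
          rw [Finset.sum_comm]
          congr 1; funext k
          simp [Finset.sum_mul]
        rw [this]
        simp only [hstoch, one_mul]
        simp [← Finset.mul_sum, hq.2, hp.2]
    · refine ⟨Matrix.of fun i j => ∑ k, T i j k * q k, ⟨?_, ?_⟩, ?_, hΛeq p⟩
      · intro i j
        simp only [Matrix.of_apply]
        apply Finset.sum_nonneg; intro k _
        exact mul_nonneg (hnn i j k) (hq.1 k)
      · intro j
        simp only [Matrix.of_apply]
        rw [Finset.sum_comm]
        calc ∑ k, ∑ i, T i j k * q k = ∑ k, (∑ i, T i j k) * q k := by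
              simp [Finset.sum_mul]
          _ = 1 := by simp [hstoch, hq.2]
      · rw [hΛeq γ, hthermal q hq]
  · intro h q hq
    obtain ⟨Λ, _, hγfix, hmap⟩ := (h γ q hγ hq).2
    rw [← hmap, hγfix]
end

section
/- Given probability vectors p, q, r and a positive Gibbs vector γ, there exists a thermal tensor T (stochastic tensor with T(γ, s) = γ for all probability vectors s) mapping (p,q) to r if and only if p thermomajorizes r with respect to γ. -/
/-!
Contracting a thermal tensor with the second input `q` gives a stochastic matrix that fixes `γ`
and sends `p` to `r`. Conversely, a stochastic matrix fixing `γ` is a thermal tensor that ignores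
its second input.
-/

open Finset

open scoped Matrix

namespace StochasticTensor

variable {d : ℕ}

def contract (T : Fin d → Fin d → Fin d → ℝ) (q : Fin d → ℝ) : Matrix (Fin d) (Fin d) ℝ :=
  Matrix.of fun i j => ∑ k, T i j k * q k

theorem tApply_eq_contract_mulVec (T : Fin d → Fin d → Fin d → ℝ) (p q : Fin d → ℝ) :
    tApply T p q = contract T q *ᵥ p := by
  funext i
  simp only [tApply, contract, Matrix.mulVec, dotProduct, Matrix.of_apply, sum_mul]
  exact sum_congr rfl fun j _ => sum_congr rfl fun k _ => by ring

theorem isStochasticMatrix_contract {T : Fin d → Fin d → Fin d → ℝ} {q : Fin d → ℝ}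
    (hT_nonneg : ∀ i j k, 0 ≤ T i j k) (hT_sum : ∀ j k, ∑ i, T i j k = 1) (hq : IsProbVec q) :
    IsStochasticMatrix (contract T q) := by
  simp only [IsStochasticMatrix, contract, Matrix.of_apply]
  refine ⟨fun i j => sum_nonneg fun k _ => mul_nonneg (hT_nonneg i j k) (hq.1 k), fun j => ?_⟩
  rw [sum_comm]
  simp only [← sum_mul, hT_sum, one_mul]
  exact hq.2

theorem tApply_const_right (Λ : Matrix (Fin d) (Fin d) ℝ) (p : Fin d → ℝ) {q : Fin d → ℝ}
    (hq : ∑ k, q k = 1) : tApply (fun i j _ => Λ i j) p q = Λ *ᵥ p := by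
  funext i
  simp only [tApply, ← mul_sum, hq, mul_one]
  rfl

end StochasticTensor

open StochasticTensor in
theorem stmt5_general {d : ℕ} (γ : Fin d → ℝ)
    (p q r : Fin d → ℝ) (hq : IsProbVec q) :
    (∃ T : Fin d → Fin d → Fin d → ℝ,
        (∀ i j k, 0 ≤ T i j k) ∧ (∀ j k, ∑ i, T i j k = 1) ∧
        (∀ s : Fin d → ℝ, IsProbVec s → tApply T γ s = γ) ∧
        tApply T p q = r) ↔
      ThermoMaj γ p r := by
  constructor
  · rintro ⟨T, hT_nonneg, hT_sum, hT_thermal, hT_pq⟩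
    refine ⟨contract T q, isStochasticMatrix_contract hT_nonneg hT_sum hq, ?_, ?_⟩
    · rw [← tApply_eq_contract_mulVec]
      exact hT_thermal q hq
    · rw [← tApply_eq_contract_mulVec]
      exact hT_pq
  · rintro ⟨Λ, ⟨hΛ_nonneg, hΛ_sum⟩, hΛγ, hΛp⟩
    refine ⟨fun i j _ => Λ i j, fun i j _ => hΛ_nonneg i j, fun j _ => hΛ_sum j, ?_, ?_⟩
    · intro s hs
      rw [tApply_const_right Λ γ hs.2, hΛγ]
    · rw [tApply_const_right Λ p hq.2, hΛp]

/-- There exists a thermal tensor mapping `(p,q)` to `r` iff `p` thermomajorizes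
`r` with respect to `γ`. -/
theorem stmt5 {d : ℕ} (γ : Fin d → ℝ) (hγ : IsProbVec γ) (hγpos : ∀ i, 0 < γ i)
    (p q r : Fin d → ℝ) (hp : IsProbVec p) (hq : IsProbVec q) (hr : IsProbVec r) :
    (∃ T : Fin d → Fin d → Fin d → ℝ,
        (∀ i j k, 0 ≤ T i j k) ∧ (∀ j k, ∑ i, T i j k = 1) ∧
        (∀ s : Fin d → ℝ, IsProbVec s → tApply T γ s = γ) ∧
        tApply T p q = r) ↔
      ThermoMaj γ p r :=
  stmt5_general γ p q r hq
end

section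
/- If a bithermal tensor T maps (p,q) to r, then defining w_p = min_i p_i/γ_i, w_q = min_i q_i/γ_i, the boundary distributions p̃ = (p − w_p γ)/(1−w_p), q̃ = (q − w_q γ)/(1−w_q), and r̄ = (r − (1−(1−w_p)(1−w_q))γ)/((1−w_p)(1−w_q)), the vector r̄ is a probability vector achievable from (p̃, q̃) by the same bithermal tensor; in particular p̃ thermomajorizes r̄ and q̃ thermomajorizes r̄ with respect to γ. -/
open Finset

/-- Enhanced thermomajorization for bithermal tensors: if a bithermal tensor
maps `(p,q)` to `r`, then the rescaled vector `r̄` is a probability vector,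
is the image of the boundary distributions `(p̃, q̃)` under the same tensor,
and is thermomajorized by both `p̃` and `q̃`. -/
theorem stmt6 {d : ℕ} (hd : 0 < d) (γ p q r : Fin d → ℝ)
    (hγ : IsProbVec γ) (hγpos : ∀ i, 0 < γ i)
    (hp : IsProbVec p) (hq : IsProbVec q)
    (T : Fin d → Fin d → Fin d → ℝ)
    (hTnn : ∀ i j k, 0 ≤ T i j k) (hTst : ∀ j k, ∑ i, T i j k = 1)
    (hTth1 : ∀ s : Fin d → ℝ, IsProbVec s → tApply T γ s = γ)
    (hTth2 : ∀ s : Fin d → ℝ, IsProbVec s → tApply T s γ = γ)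
    (hr : tApply T p q = r)
    (wp wq : ℝ)
    (hwp : wp = ⨅ i, p i / γ i) (hwq : wq = ⨅ i, q i / γ i)
    (hwp1 : wp < 1) (hwq1 : wq < 1) :
    IsProbVec (fun i => (r i - (1 - (1 - wp) * (1 - wq)) * γ i) / ((1 - wp) * (1 - wq))) ∧
    tApply T (fun i => (p i - wp * γ i) / (1 - wp)) (fun i => (q i - wq * γ i) / (1 - wq))
      = (fun i => (r i - (1 - (1 - wp) * (1 - wq)) * γ i) / ((1 - wp) * (1 - wq))) ∧
    ThermoMaj γ (fun i => (p i - wp * γ i) / (1 - wp))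
      (fun i => (r i - (1 - (1 - wp) * (1 - wq)) * γ i) / ((1 - wp) * (1 - wq))) ∧
    ThermoMaj γ (fun i => (q i - wq * γ i) / (1 - wq))
      (fun i => (r i - (1 - (1 - wp) * (1 - wq)) * γ i) / ((1 - wp) * (1 - wq))) := by
  haveI : Nonempty (Fin d) := Fin.pos_iff_nonempty.mp hd
  have hwp0 : (0:ℝ) < 1 - wp := by linarith
  have hwq0 : (0:ℝ) < 1 - wq := by linarith
  set pt : Fin d → ℝ := fun i => (p i - wp * γ i) / (1 - wp) with hptdef
  set qt : Fin d → ℝ := fun i => (q i - wq * γ i) / (1 - wq) with hqtdef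
  set rb : Fin d → ℝ :=
    fun i => (r i - (1 - (1 - wp) * (1 - wq)) * γ i) / ((1 - wp) * (1 - wq)) with hrbdef
  have hple : ∀ i, wp * γ i ≤ p i := by
    intro i
    have h1 : wp ≤ p i / γ i := by
      rw [hwp]; exact ciInf_le (Finite.bddBelow_range _) i
    exact (le_div_iff₀ (hγpos i)).mp h1
  have hqle : ∀ i, wq * γ i ≤ q i := by
    intro i
    have h1 : wq ≤ q i / γ i := by
      rw [hwq]; exact ciInf_le (Finite.bddBelow_range _) i
    exact (le_div_iff₀ (hγpos i)).mp h1
  have hpt : IsProbVec pt := by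
    constructor
    · intro i; exact div_nonneg (by linarith [hple i]) hwp0.le
    · rw [hptdef]
      rw [← Finset.sum_div, Finset.sum_sub_distrib, ← Finset.mul_sum, hp.2, hγ.2]
      field_simp
  have hqt : IsProbVec qt := by
    constructor
    · intro i; exact div_nonneg (by linarith [hqle i]) hwq0.le
    · rw [hqtdef]
      rw [← Finset.sum_div, Finset.sum_sub_distrib, ← Finset.mul_sum, hq.2, hγ.2]
      field_simp
  have key : ∀ i, (∑ j, ∑ k, T i j k * pt j * qt k) = rb i := by
    intro i
    have hA : (∑ j, ∑ k, T i j k * p j * q k) = r i := congrFun hr i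
    have hB : (∑ j, ∑ k, T i j k * γ j * q k) = γ i := congrFun (hTth1 q hq) i
    have hC : (∑ j, ∑ k, T i j k * p j * γ k) = γ i := congrFun (hTth2 p hp) i
    have hD : (∑ j, ∑ k, T i j k * γ j * γ k) = γ i := congrFun (hTth1 γ hγ) i
    have h1 : ∀ j k, T i j k * pt j * qt k =
        (T i j k * p j * q k - wq * (T i j k * p j * γ k) - wp * (T i j k * γ j * q k)
          + wp * wq * (T i j k * γ j * γ k)) / ((1 - wp) * (1 - wq)) := by
      intro j k
      rw [hptdef, hqtdef]
      field_simp
      ring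
    simp only [h1, ← Finset.sum_div]
    have h2 : (∑ j, ∑ k, (T i j k * p j * q k - wq * (T i j k * p j * γ k)
        - wp * (T i j k * γ j * q k) + wp * wq * (T i j k * γ j * γ k)))
        = r i - wq * γ i - wp * γ i + wp * wq * γ i := by
      simp only [Finset.sum_sub_distrib, Finset.sum_add_distrib, ← Finset.mul_sum, hA, hB, hC, hD]
    rw [h2, hrbdef]
    ring_nf
  have hmain : tApply T pt qt = rb := by
    funext i; exact key i
  have hrb : IsProbVec rb := by
    rw [← hmain]
    constructor
    · intro i
      exact Finset.sum_nonneg fun j _ => Finset.sum_nonneg fun k _ =>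
        mul_nonneg (mul_nonneg (hTnn i j k) (hpt.1 j)) (hqt.1 k)
    · show (∑ i, ∑ j, ∑ k, T i j k * pt j * qt k) = 1
      rw [Finset.sum_comm]
      have h3 : ∀ j, (∑ i, ∑ k, T i j k * pt j * qt k) = ∑ k, (∑ i, T i j k) * pt j * qt k := by
        intro j
        rw [Finset.sum_comm]
        exact Finset.sum_congr rfl fun k _ => by rw [← Finset.sum_mul, ← Finset.sum_mul]
      simp only [h3, hTst, one_mul, ← Finset.mul_sum, hqt.2, mul_one, hpt.2]
  refine ⟨hrb, hmain, ?_, ?_⟩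
  · refine ⟨Matrix.of fun i j => ∑ k, T i j k * qt k, ⟨?_, ?_⟩, ?_, ?_⟩
    · intro i j
      simp only [Matrix.of_apply]
      exact Finset.sum_nonneg fun k _ => mul_nonneg (hTnn i j k) (hqt.1 k)
    · intro j
      simp only [Matrix.of_apply]
      rw [Finset.sum_comm]
      calc (∑ k, ∑ i, T i j k * qt k) = ∑ k, (∑ i, T i j k) * qt k := by
            exact Finset.sum_congr rfl fun k _ => by rw [← Finset.sum_mul]
        _ = 1 := by simp only [hTst, one_mul, hqt.2]
    · funext i
      have : (Matrix.of fun i j => ∑ k, T i j k * qt k).mulVec γ i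
          = ∑ j, ∑ k, T i j k * γ j * qt k := by
        simp only [Matrix.mulVec, dotProduct, Matrix.of_apply, Finset.sum_mul]
        exact Finset.sum_congr rfl fun j _ => Finset.sum_congr rfl fun k _ => by ring
      rw [this]
      exact congrFun (hTth1 qt hqt) i
    · funext i
      have : (Matrix.of fun i j => ∑ k, T i j k * qt k).mulVec pt i
          = ∑ j, ∑ k, T i j k * pt j * qt k := by
        simp only [Matrix.mulVec, dotProduct, Matrix.of_apply, Finset.sum_mul]
        exact Finset.sum_congr rfl fun j _ => Finset.sum_congr rfl fun k _ => by ring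
      rw [this]
      exact key i
  · refine ⟨Matrix.of fun i k => ∑ j, T i j k * pt j, ⟨?_, ?_⟩, ?_, ?_⟩
    · intro i k
      simp only [Matrix.of_apply]
      exact Finset.sum_nonneg fun j _ => mul_nonneg (hTnn i j k) (hpt.1 j)
    · intro k
      simp only [Matrix.of_apply]
      rw [Finset.sum_comm]
      calc (∑ j, ∑ i, T i j k * pt j) = ∑ j, (∑ i, T i j k) * pt j := by
            exact Finset.sum_congr rfl fun j _ => by rw [← Finset.sum_mul]
        _ = 1 := by simp only [hTst, one_mul, hpt.2]
    · funext i
      have : (Matrix.of fun i k => ∑ j, T i j k * pt j).mulVec γ i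
          = ∑ j, ∑ k, T i j k * pt j * γ k := by
        simp only [Matrix.mulVec, dotProduct, Matrix.of_apply, Finset.sum_mul]
        rw [Finset.sum_comm]
      rw [this]
      exact congrFun (hTth2 pt hpt) i
    · funext i
      have : (Matrix.of fun i k => ∑ j, T i j k * pt j).mulVec qt i
          = ∑ j, ∑ k, T i j k * pt j * qt k := by
        simp only [Matrix.mulVec, dotProduct, Matrix.of_apply, Finset.sum_mul]
        rw [Finset.sum_comm]
      rw [this]
      exact key i
end

section
/- In dimension 2, the set of bithermal tensors with respect to γ = (1/(1+g), g/(1+g)) is exactly the line segment with endpoints T^{(1)} and T^{(2)}, where T^{(1)}_{0,0,0} = 1−g, T^{(1)}_{0,0,1} = T^{(1)}_{0,1,0} = 1, T^{(1)}_{0,1,1}=0 (with T^{(1)}_{1,j,k} = 1 − T^{(1)}_{0,j,k}), and T^{(2)}_{0,0,0} = 1−g(1−g), T^{(2)}_{0,0,1} = T^{(2)}_{0,1,0} = 1−g, T^{(2)}_{0,1,1} = 1. -/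
open Finset

/-- Gibbs state on two levels with ratio `g`. -/
noncomputable def gibbs2 (g : ℝ) : Fin 2 → ℝ := ![1 / (1 + g), g / (1 + g)]

/-- First extremal bithermal tensor in dimension 2. -/
noncomputable def Tone (g : ℝ) : Fin 2 → Fin 2 → Fin 2 → ℝ :=
  fun i j k => if i = 0 then ![![1 - g, 1], ![1, 0]] j k
               else 1 - ![![1 - g, 1], ![1, 0]] j k

/-- Second extremal bithermal tensor in dimension 2. -/
noncomputable def Ttwo (g : ℝ) : Fin 2 → Fin 2 → Fin 2 → ℝ :=
  fun i j k => if i = 0 then ![![1 - g * (1 - g), 1 - g], ![1 - g, 1]] j k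
               else 1 - ![![1 - g * (1 - g), 1 - g], ![1 - g, 1]] j k

/-- In dimension 2 the set of bithermal tensors w.r.t.
`γ = (1/(1+g), g/(1+g))` is exactly the segment between `T⁽¹⁾` and `T⁽²⁾`. -/
theorem stmt8 (g : ℝ) (hg0 : 0 < g) (hg1 : g < 1) :
    {T : Fin 2 → Fin 2 → Fin 2 → ℝ |
        (∀ i j k, 0 ≤ T i j k) ∧ (∀ j k, ∑ i, T i j k = 1) ∧
        (∀ i j, ∑ k, T i j k * gibbs2 g k = gibbs2 g i) ∧
        (∀ i k, ∑ j, T i j k * gibbs2 g j = gibbs2 g i)} =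
      segment ℝ (Tone g) (Ttwo g) := by
  have h1g : (0:ℝ) < 1 + g := by linarith
  have h1g' : (1:ℝ) + g ≠ 0 := ne_of_gt h1g
  ext T
  rw [segment_eq_image]
  simp only [Set.mem_setOf_eq, Set.mem_image, Set.mem_Icc]
  constructor
  · rintro ⟨h0, hs, hk, hj⟩
    set t := T 0 1 1 with htdef
    have hsum11 := hs 1 1
    rw [Fin.sum_univ_two] at hsum11
    refine ⟨t, ⟨h0 0 1 1, by nlinarith [h0 1 1 1]⟩, ?_⟩
    have e01 : T 0 0 1 = 1 - g * t := by
      have h := hj 0 1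
      rw [Fin.sum_univ_two] at h
      simp only [gibbs2, Matrix.cons_val_zero, Matrix.cons_val_one, Matrix.head_cons] at h
      field_simp at h
      linarith
    have e10 : T 0 1 0 = 1 - g * t := by
      have h := hk 0 1
      rw [Fin.sum_univ_two] at h
      simp only [gibbs2, Matrix.cons_val_zero, Matrix.cons_val_one, Matrix.head_cons] at h
      field_simp at h
      linarith
    have e00 : T 0 0 0 = 1 - g * (1 - g * t) := by
      have h := hk 0 0
      rw [Fin.sum_univ_two] at h
      simp only [gibbs2, Matrix.cons_val_zero, Matrix.cons_val_one, Matrix.head_cons] at h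
      field_simp at h
      nlinarith [e01]
    have f : ∀ j k, T 1 j k = 1 - T 0 j k := by
      intro j k
      have h := hs j k
      rw [Fin.sum_univ_two] at h
      linarith
    funext i j k
    simp only [Pi.add_apply, Pi.smul_apply, smul_eq_mul]
    fin_cases i <;> fin_cases j <;> fin_cases k <;>
      simp only [Tone, Ttwo, f, e00, e01, e10, Matrix.cons_val_zero, Matrix.cons_val_one,
        Matrix.head_cons, Fin.isValue, if_true, if_pos rfl] <;>
      norm_num <;> linarith [e00, e01, e10, hsum11, f 0 0, f 0 1, f 1 0, f 1 1]
  · rintro ⟨t, ⟨ht0, ht1⟩, rfl⟩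
    refine ⟨?_, ?_, ?_, ?_⟩
    · intro i j k
      fin_cases i <;> fin_cases j <;> fin_cases k <;>
        simp only [Pi.add_apply, Pi.smul_apply, smul_eq_mul, Tone, Ttwo,
          Matrix.cons_val_zero, Matrix.cons_val_one, Matrix.head_cons] <;>
        norm_num <;> nlinarith [mul_nonneg ht0 (mul_nonneg hg0.le hg0.le), mul_nonneg ht0 hg0.le, mul_nonneg (sub_nonneg.2 ht1) hg0.le]
    · intro j k
      rw [Fin.sum_univ_two]
      fin_cases j <;> fin_cases k <;>
        simp only [Pi.add_apply, Pi.smul_apply, smul_eq_mul, Tone, Ttwo,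
          Matrix.cons_val_zero, Matrix.cons_val_one, Matrix.head_cons] <;>
        norm_num <;> ring
    · intro i j
      rw [Fin.sum_univ_two]
      fin_cases i <;> fin_cases j <;>
        simp only [Pi.add_apply, Pi.smul_apply, smul_eq_mul, Tone, Ttwo, gibbs2,
          Matrix.cons_val_zero, Matrix.cons_val_one, Matrix.head_cons] <;>
        norm_num <;> field_simp <;> ring
    · intro i k
      rw [Fin.sum_univ_two]
      fin_cases i <;> fin_cases k <;>
        simp only [Pi.add_apply, Pi.smul_apply, smul_eq_mul, Tone, Ttwo, gibbs2,
          Matrix.cons_val_zero, Matrix.cons_val_one, Matrix.head_cons] <;>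
        norm_num <;> field_simp <;> ring
end

section
/- The tensor defined by T_{ijk} = 1 if i = min(j,k) and 0 otherwise is a bicooling tensor (T_{ijk}=0 for i>j or i>k, stochastic in i), and it is an extreme point of the bicooling polytope; moreover T(p,q)_i = p_i ∑_{l≥i} q_l + q_i ∑_{l>i} p_l, which is the distribution of min of two independent random variables with laws p and q. -/
open Finset

def BicoolingSet (d : ℕ) : Set (Fin d → Fin d → Fin d → ℝ) :=
  {T | (∀ i j k, 0 ≤ T i j k) ∧ (∀ j k, ∑ i, T i j k = 1) ∧
       (∀ i j k : Fin d, (j < i ∨ k < i) → T i j k = 0)}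

/-- The "minimum" tensor: `T_{ijk} = 1` iff `i = min(j,k)`. -/
def Tmin (d : ℕ) : Fin d → Fin d → Fin d → ℝ :=
  fun i j k => if i = min j k then 1 else 0

/-! The bicooling conditions force every entry into `[0, 1]`, so the bicooling polytope lies in
the unit cube, and the `0`-`1` tensor `Tmin` is a vertex of the cube, hence an extreme point of the
polytope. The formula for `Tmin(p, q)` splits the event `i = min j k` into the disjoint cases
`j = i ≤ k` and `k = i < j`. -/

open Set in
def unitCube (d : ℕ) : Set (Fin d → Fin d → Fin d → ℝ) :=
  univ.pi fun _ => univ.pi fun _ => univ.pi fun _ => Icc 0 1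

lemma tmin_mem_bicoolingSet (d : ℕ) : Tmin d ∈ BicoolingSet d := by
  refine ⟨fun i j k => ?_, fun j k => by simp [Tmin], fun i j k h => if_neg ?_⟩
  · unfold Tmin; positivity
  · rintro rfl
    exact h.elim (min_le_left j k).not_gt (min_le_right j k).not_gt

lemma bicoolingSet_subset_unitCube (d : ℕ) : BicoolingSet d ⊆ unitCube d := by
  rintro T ⟨hnonneg, hsum, -⟩
  simp only [unitCube, Set.mem_univ_pi, Set.mem_Icc]
  exact fun i j k =>
    ⟨hnonneg i j k, hsum j k ▸ single_le_sum (fun i' _ => hnonneg i' j k) (mem_univ i)⟩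

lemma tmin_mem_extremePoints_unitCube (d : ℕ) : Tmin d ∈ (unitCube d).extremePoints ℝ := by
  simp only [unitCube, extremePoints_pi, Set.extremePoints_Icc zero_le_one, Set.mem_univ_pi, Tmin]
  intro i j k
  split_ifs <;> simp

lemma ite_eq_min {α M : Type*} [LinearOrder α] [AddZeroClass M] (i j k : α) (a : M) :
    (if i = min j k then a else 0) =
      (if j = i ∧ i ≤ k then a else 0) + (if k = i ∧ i < j then a else 0) := by
  split_ifs <;> first | (exfalso; grind) | simp

lemma tApply_tmin {d : ℕ} (p q : Fin d → ℝ) (i : Fin d) :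
    tApply (Tmin d) p q i =
      p i * ∑ l ∈ univ.filter (i ≤ ·), q l + q i * ∑ l ∈ univ.filter (i < ·), p l := by
  simp only [tApply, Tmin, ite_eq_min, add_mul, sum_add_distrib, ite_and, ite_mul, one_mul,
    zero_mul]
  simp [sum_ite_eq', sum_filter, mul_sum, mul_comm]

/-- `Tmin` is a bicooling tensor, an extreme point of the bicooling polytope,
and `T(p,q)_i = p_i ∑_{l ≥ i} q_l + q_i ∑_{l > i} p_l`, the law of the minimum
of two independent random variables with laws `p` and `q`. -/
theorem stmt13 (d : ℕ) :
    Tmin d ∈ BicoolingSet d ∧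
    Tmin d ∈ Set.extremePoints ℝ (BicoolingSet d) ∧
    (∀ p q : Fin d → ℝ, IsProbVec p → IsProbVec q → ∀ i : Fin d,
      tApply (Tmin d) p q i =
        p i * (∑ l ∈ Finset.univ.filter (fun l : Fin d => i ≤ l), q l) +
        q i * (∑ l ∈ Finset.univ.filter (fun l : Fin d => i < l), p l)) :=
  ⟨tmin_mem_bicoolingSet d,
    inter_extremePoints_subset_extremePoints_of_subset (bicoolingSet_subset_unitCube d)
      ⟨tmin_mem_bicoolingSet d, tmin_mem_extremePoints_unitCube d⟩,
    fun p q _ _ i => tApply_tmin p q i⟩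
end
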